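/- arXiv:2502.15376 — 4 statements merged into one kernel-verified Lean document; each statement's English description precedes it below -/
import Mathlib

section
/- Fix integers n_x, n_y ≥ 1 and N ≥ 1, and let S = ZMod n_x × ZMod n_y with shifts x̂ = (1,0) and ŷ = (0,1). Let Uˣ, Uʸ : S → U(N) be a link configuration and define the plaquettes W_k = Uˣ_k · Uʸ_{k+x̂} · (Uˣ_{k+ŷ})† · (Uʸ_k)† for k ∈ S. Then the discrete Chern number C̃ = (1/(2π)) · Σ_{k ∈ S} Im(log(det W_k)) is an integer, where log denotes the principal branch of the complex logarithm (with imaginary part in (−π, π]). -/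
open Matrix Real

private lemma det_unit_ne_zero {N : ℕ} (u : Matrix.unitaryGroup (Fin N) ℂ) :
    Matrix.det (u : Matrix (Fin N) (Fin N) ℂ) ≠ 0 := by
  have h : (u : Matrix (Fin N) (Fin N) ℂ) * star (u : Matrix (Fin N) (Fin N) ℂ) = 1 :=
    u.2.2
  have hd : Matrix.det (u : Matrix (Fin N) (Fin N) ℂ) *
      Matrix.det (star (u : Matrix (Fin N) (Fin N) ℂ)) = 1 := by
    rw [← Matrix.det_mul, h, Matrix.det_one]
  exact left_ne_zero_of_mul_eq_one hd

/-- The discrete Chern number `(1/2π) Σ_k Im log det W_k` of the plaquettes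
`W_k = Uˣ_k · Uʸ_{k+x̂} · (Uˣ_{k+ŷ})† · (Uʸ_k)†` of a link configuration on a periodic
lattice is an integer (`log` is the principal branch of the complex logarithm). -/
theorem discrete_chern_number_is_integer (nx ny N : ℕ) [NeZero nx] [NeZero ny] (hN : 1 ≤ N)
    (Ux Uy : ZMod nx × ZMod ny → Matrix.unitaryGroup (Fin N) ℂ) :
    ∃ m : ℤ,
      (1 / (2 * Real.pi)) *
        ∑ k : ZMod nx × ZMod ny,
          (Complex.log (Matrix.det
            ((Ux k : Matrix (Fin N) (Fin N) ℂ) *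
              (Uy (k + (1, 0)) : Matrix (Fin N) (Fin N) ℂ) *
              (Ux (k + (0, 1)) : Matrix (Fin N) (Fin N) ℂ)ᴴ *
              (Uy k : Matrix (Fin N) (Fin N) ℂ)ᴴ))).im = (m : ℝ) := by
  classical
  set a : ZMod nx × ZMod ny → ℂ := fun k => Matrix.det (Ux k : Matrix (Fin N) (Fin N) ℂ)
  set b : ZMod nx × ZMod ny → ℂ := fun k => Matrix.det (Uy k : Matrix (Fin N) (Fin N) ℂ)
  have ha : ∀ k, a k ≠ 0 := fun k => det_unit_ne_zero (Ux k)
  have hb : ∀ k, b k ≠ 0 := fun k => det_unit_ne_zero (Uy k)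
  set S : ℝ := ∑ k : ZMod nx × ZMod ny,
          (Complex.log (Matrix.det
            ((Ux k : Matrix (Fin N) (Fin N) ℂ) *
              (Uy (k + (1, 0)) : Matrix (Fin N) (Fin N) ℂ) *
              (Ux (k + (0, 1)) : Matrix (Fin N) (Fin N) ℂ)ᴴ *
              (Uy k : Matrix (Fin N) (Fin N) ℂ)ᴴ))).im with hS
  have hSangle : (S : Real.Angle) = ((0 : ℝ) : Real.Angle) := by
    rw [hS, ← Real.Angle.coe_coeHom, map_sum]
    have hterm : ∀ k : ZMod nx × ZMod ny,
        Real.Angle.coeHom ((Complex.log (Matrix.det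
            ((Ux k : Matrix (Fin N) (Fin N) ℂ) *
              (Uy (k + (1, 0)) : Matrix (Fin N) (Fin N) ℂ) *
              (Ux (k + (0, 1)) : Matrix (Fin N) (Fin N) ℂ)ᴴ *
              (Uy k : Matrix (Fin N) (Fin N) ℂ)ᴴ))).im)
        = ((Complex.arg (a k) : Real.Angle) + (Complex.arg (b (k + (1, 0))) : Real.Angle))
          + (-(Complex.arg (a (k + (0, 1))) : Real.Angle)
            + -(Complex.arg (b k) : Real.Angle)) := by
      intro k
      have hdet : Matrix.det
            ((Ux k : Matrix (Fin N) (Fin N) ℂ) *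
              (Uy (k + (1, 0)) : Matrix (Fin N) (Fin N) ℂ) *
              (Ux (k + (0, 1)) : Matrix (Fin N) (Fin N) ℂ)ᴴ *
              (Uy k : Matrix (Fin N) (Fin N) ℂ)ᴴ)
          = a k * b (k + (1, 0)) * (starRingEnd ℂ) (a (k + (0, 1))) * (starRingEnd ℂ) (b k) := by
        simp [a, b, Matrix.det_mul, Matrix.det_conjTranspose, mul_assoc, mul_comm, mul_left_comm]
      have h1 : a k * b (k + (1, 0)) ≠ 0 := mul_ne_zero (ha k) (hb (k + (1, 0)))
      have h2 : (starRingEnd ℂ) (a (k + (0, 1))) ≠ 0 := star_ne_zero.mpr (ha (k + (0, 1)))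
      have h3 : (starRingEnd ℂ) (b k) ≠ 0 := star_ne_zero.mpr (hb k)
      rw [Real.Angle.coe_coeHom]
      show ((Complex.log _).im : Real.Angle) = _
      rw [Complex.log_im, hdet,
        Complex.arg_mul_coe_angle (mul_ne_zero h1 h2) h3,
        Complex.arg_mul_coe_angle h1 h2,
        Complex.arg_mul_coe_angle (ha k) (hb (k + (1, 0))),
        Complex.arg_conj_coe_angle, Complex.arg_conj_coe_angle]
      abel
    rw [Finset.sum_congr rfl (fun k _ => hterm k)]
    rw [Finset.sum_add_distrib, Finset.sum_add_distrib, Finset.sum_add_distrib,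
      Finset.sum_neg_distrib, Finset.sum_neg_distrib]
    have e1 : ∑ k : ZMod nx × ZMod ny, (Complex.arg (b (k + (1, 0))) : Real.Angle)
        = ∑ k : ZMod nx × ZMod ny, (Complex.arg (b k) : Real.Angle) :=
      Fintype.sum_equiv (Equiv.addRight ((1, 0) : ZMod nx × ZMod ny)) _ _ (fun k => rfl)
    have e2 : ∑ k : ZMod nx × ZMod ny, (Complex.arg (a (k + (0, 1))) : Real.Angle)
        = ∑ k : ZMod nx × ZMod ny, (Complex.arg (a k) : Real.Angle) :=
      Fintype.sum_equiv (Equiv.addRight ((0, 1) : ZMod nx × ZMod ny)) _ _ (fun k => rfl)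
    rw [e1, e2, map_zero]
    abel
  obtain ⟨m, hm⟩ := Real.Angle.angle_eq_iff_two_pi_dvd_sub.mp hSangle
  rw [sub_zero] at hm
  refine ⟨m, ?_⟩
  rw [hm]
  field_simp
end

section
/- Fix integers n_x, n_y ≥ 1 and let S = ZMod n_x × ZMod n_y with shifts x̂ = (1,0) and ŷ = (0,1). Let θ : S → ℝ. Then there exist functions τˣ, τʸ : S → ℝ satisfying τˣ_k + τʸ_{k+x̂} − τˣ_{k+ŷ} − τʸ_k = θ_k for all k ∈ S if and only if Σ_{k ∈ S} θ_k = 0. -/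
/-!
Summing the curl over the torus telescopes, since translation permutes the sites; this gives
necessity. Conversely, on a cycle `ZMod n` a function with zero sum is a difference
`f (a + 1) - f a`, its prefix sums being `n`-periodic. Applied to the row sums of `θ` this gives
`τʸ`, supported on the column `j = 0`, which leaves a remainder with zero sum along every row;
applied row by row to that remainder it gives `τˣ`.
-/

open Finset

variable {M : Type*} [AddCommGroup M]

def discreteCurl {G : Type*} [Add G] (τx τy : G → M) (u v : G) (k : G) : M :=
  τx k + τy (k + u) - τx (k + v) - τy k

theorem Fintype.sum_comp_add_right {G : Type*} [AddGroup G] [Fintype G] (f : G → M) (c : G) :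
    ∑ k, f (k + c) = ∑ k, f k :=
  Fintype.sum_equiv (Equiv.addRight c) _ _ fun _ => rfl

theorem sum_discreteCurl_eq_zero {G : Type*} [AddGroup G] [Fintype G] (τx τy : G → M)
    (u v : G) : ∑ k, discreteCurl τx τy u v k = 0 := by
  simp only [discreteCurl, sum_sub_distrib, sum_add_distrib, Fintype.sum_comp_add_right]
  abel

namespace ZMod

theorem sum_range_natCast {n : ℕ} [NeZero n] (g : ZMod n → M) :
    ∑ i ∈ range n, g i = ∑ a, g a :=
  sum_nbij' (↑) val (fun _ _ => mem_univ _) (fun a _ => mem_range.2 a.val_lt)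
    (fun _ hi => val_cast_of_lt (mem_range.1 hi)) (fun a _ => natCast_zmod_val a) fun _ _ => rfl

theorem exists_sub_eq_of_sum_eq_zero {n : ℕ} [NeZero n] (h : ZMod n → M)
    (hsum : ∑ a, h a = 0) : ∃ f : ZMod n → M, ∀ a, f (a + 1) - f a = h a := by
  set F : ℕ → M := fun m => ∑ i ∈ range m, h i
  have hF : Function.Periodic F n := fun m => by
    simp only [F, sum_range_add, Nat.cast_add]
    rw [sum_range_natCast fun a : ZMod n => h (m + a),
      Fintype.sum_equiv (Equiv.addLeft (m : ZMod n)) (fun a => h (m + a)) h fun _ => rfl, hsum,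
      add_zero]
  refine ⟨fun a => F a.val, fun a => ?_⟩
  have hsucc : a + 1 = ((a.val + 1 : ℕ) : ZMod n) := by push_cast [natCast_zmod_val]; rfl
  show F (a + 1).val - F a.val = h a
  rw [hsucc, val_natCast, hF.map_mod_nat]
  simp only [F, sum_range_succ, natCast_zmod_val, add_sub_cancel_left]

end ZMod

theorem exists_discreteCurl_eq_of_sum_eq_zero {nx ny : ℕ} [NeZero nx] [NeZero ny]
    (θ : ZMod nx × ZMod ny → M) (hθ : ∑ k, θ k = 0) :
    ∃ τx τy : ZMod nx × ZMod ny → M, ∀ k, discreteCurl τx τy (1, 0) (0, 1) k = θ k := by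
  obtain ⟨g, hg⟩ := ZMod.exists_sub_eq_of_sum_eq_zero (fun i => ∑ j, θ (i, j))
    (by rw [← hθ, Fintype.sum_prod_type])
  set θ' : ZMod nx → ZMod ny → M := fun i j => θ (i, j) - if j = 0 then g (i + 1) - g i else 0
  have hrow : ∀ i, ∑ j, θ' i j = 0 := fun i => by
    simp [θ', sum_sub_distrib, hg]
  choose f hf using fun i => ZMod.exists_sub_eq_of_sum_eq_zero (θ' i) (hrow i)
  refine ⟨fun k => -f k.1 k.2, fun k => if k.2 = 0 then g k.1 else 0, fun ⟨i, j⟩ => ?_⟩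
  have hfij := hf i j
  simp only [θ'] at hfij
  simp only [discreteCurl, Prod.mk_add_mk, add_zero]
  split_ifs at hfij ⊢ <;> rw [eq_sub_iff_add_eq] at hfij <;> rw [← hfij] <;> abel

/-- Solvability of the discrete-curl equation on a periodic two-dimensional lattice: a
family of plaquette angles `θ : S → ℝ` arises as the discrete curl
`τˣ_k + τʸ_{k+x̂} − τˣ_{k+ŷ} − τʸ_k` of link angles `(τˣ, τʸ)` if and only if
`Σ_{k ∈ S} θ_k = 0`. -/
theorem discrete_curl_solvable_iff_sum_zero (nx ny : ℕ) [NeZero nx] [NeZero ny]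
    (θ : ZMod nx × ZMod ny → ℝ) :
    (∃ τx τy : ZMod nx × ZMod ny → ℝ,
        ∀ k : ZMod nx × ZMod ny,
          τx k + τy (k + (1, 0)) - τx (k + (0, 1)) - τy k = θ k) ↔
      ∑ k : ZMod nx × ZMod ny, θ k = 0 := by
  constructor
  · rintro ⟨τx, τy, hτ⟩
    rw [← sum_discreteCurl_eq_zero τx τy (1, 0) (0, 1)]
    exact (sum_congr rfl fun k _ => hτ k).symm
  · exact exists_discreteCurl_eq_of_sum_eq_zero θ
end

section
/- Fix integers n_x, n_y ≥ 1 and let S = ZMod n_x × ZMod n_y with shifts x̂ = (1,0) and ŷ = (0,1). Let w : S → 𝕋 be a function into the circle group 𝕋 = {z ∈ ℂ : |z| = 1}. Then there exist uˣ, uʸ : S → 𝕋 satisfying uˣ_k · uʸ_{k+x̂} · (uˣ_{k+ŷ})⁻¹ · (uʸ_k)⁻¹ = w_k for all k ∈ S if and only if ∏_{k ∈ S} w_k = 1. -/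
open Finset

private lemma prod_range_cast' {M : Type*} [CommMonoid M] (n : ℕ) [NeZero n]
    (f : ZMod n → M) : ∏ k ∈ Finset.range n, f (k : ZMod n) = ∏ i : ZMod n, f i :=
  Finset.prod_nbij' (fun k => (k : ZMod n)) ZMod.val
    (fun _ _ => Finset.mem_univ _)
    (fun a _ => Finset.mem_range.2 (ZMod.val_lt a))
    (fun a ha => ZMod.val_cast_of_lt (Finset.mem_range.1 ha))
    (fun a _ => ZMod.natCast_zmod_val a)
    (fun _ _ => rfl)

/-- A family of `U(1)` fluxes `w : S → 𝕋` on a periodic two-dimensional lattice can be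
generated from `U(1)` link variables, i.e. `uˣ_k · uʸ_{k+x̂} · (uˣ_{k+ŷ})⁻¹ · (uy_k)⁻¹ = w_k`
for all sites `k`, if and only if `∏_{k ∈ S} w_k = 1`. -/
theorem circle_plaquettes_generated_iff_prod_one (nx ny : ℕ) [NeZero nx] [NeZero ny]
    (w : ZMod nx × ZMod ny → Circle) :
    (∃ ux uy : ZMod nx × ZMod ny → Circle,
        ∀ k : ZMod nx × ZMod ny,
          ux k * uy (k + (1, 0)) * (ux (k + (0, 1)))⁻¹ * (uy k)⁻¹ = w k) ↔
      ∏ k : ZMod nx × ZMod ny, w k = 1 := by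
  constructor
  · rintro ⟨ux, uy, h⟩
    calc ∏ k, w k
        = ∏ k, (ux k * uy (k + (1,0)) * (ux (k + (0,1)))⁻¹ * (uy k)⁻¹) :=
          Finset.prod_congr rfl fun k _ => (h k).symm
      _ = 1 := by
          simp only [Finset.prod_mul_distrib, Finset.prod_inv_distrib]
          rw [show (∏ k : ZMod nx × ZMod ny, uy (k + (1,0))) = ∏ k, uy k from
                Equiv.prod_comp (Equiv.addRight ((1,0) : ZMod nx × ZMod ny)) uy,
              show (∏ k : ZMod nx × ZMod ny, ux (k + (0,1))) = ∏ k, ux k from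
                Equiv.prod_comp (Equiv.addRight ((0,1) : ZMod nx × ZMod ny)) ux]
          simp [mul_comm, mul_left_comm, mul_assoc]
  · intro hw
    have hnx : 0 < nx := Nat.pos_of_ne_zero (NeZero.ne nx)
    have hny : 0 < ny := Nat.pos_of_ne_zero (NeZero.ne ny)
    set R : ZMod ny → Circle := fun j => ∏ i : ZMod nx, w (i, j) with hR
    have hRprod : ∏ j : ZMod ny, R j = 1 := by
      rw [← hw, Fintype.prod_prod_type]
      exact (Finset.prod_comm).symm
    set T : ZMod ny → Circle := fun j => ∏ j' ∈ Finset.range j.val, R (j' : ZMod ny) with hT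
    set P : ZMod nx × ZMod ny → Circle :=
      fun k => ∏ i' ∈ Finset.range k.1.val, w ((i' : ZMod nx), k.2) with hP
    refine ⟨fun k => if k.1.val = nx - 1 then (T k.2)⁻¹ else 1, P, ?_⟩
    rintro ⟨i, j⟩
    have hadd1 : ((i, j) : ZMod nx × ZMod ny) + (1, 0) = (i + 1, j) := by
      simp [Prod.ext_iff]
    have hadd2 : ((i, j) : ZMod nx × ZMod ny) + (0, 1) = (i, j + 1) := by
      simp [Prod.ext_iff, add_comm]
    rw [hadd1, hadd2]
    have hival : i.val ≤ nx - 1 := Nat.le_sub_one_of_lt (ZMod.val_lt i)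
    -- key fact: T (j+1) * (T j)⁻¹ = R j
    have hTstep : T (j + 1) * (T j)⁻¹ = R j := by
      rcases lt_or_eq_of_le (Nat.le_sub_one_of_lt (ZMod.val_lt j)) with hj | hj
      · have hj1 : j.val + 1 < ny := by omega
        have hv : (j + 1).val = j.val + 1 := by
          rw [ZMod.val_add, ZMod.val_one'' (by omega), Nat.mod_eq_of_lt hj1]
        rw [hT]
        simp only [hv, Finset.prod_range_succ, ZMod.natCast_zmod_val]
        simp [mul_comm, mul_left_comm, mul_assoc]
      · have hjc : j = ((ny - 1 : ℕ) : ZMod ny) := by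
          rw [← ZMod.natCast_zmod_val j, hj]
        have hj0 : (j + 1).val = 0 := by
          rw [hjc]
          norm_num [← Nat.cast_add_one, Nat.sub_add_cancel hny]
        have hT1 : T (j + 1) = 1 := by rw [hT]; simp [hj0]
        have h2 : ∏ j' ∈ Finset.range ((ny - 1) + 1), R (j' : ZMod ny) = 1 := by
          rw [Nat.sub_add_cancel hny, prod_range_cast']; exact hRprod
        have hTj : T j * R j = 1 := by
          rw [Finset.prod_range_succ, ← hjc] at h2
          show (∏ j' ∈ Finset.range j.val, R (j' : ZMod ny)) * R j = 1
          rw [hj]; exact h2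
        rw [hT1, eq_comm, ← hTj]
        simp [mul_comm, mul_left_comm, mul_assoc]
    rcases lt_or_eq_of_le hival with hi | hi
    · have hne : i.val ≠ nx - 1 := Nat.ne_of_lt hi
      have hi1 : i.val + 1 < nx := by omega
      have hval : (i + 1).val = i.val + 1 := by
        rw [ZMod.val_add, ZMod.val_one'' (by omega), Nat.mod_eq_of_lt hi1]
      simp only [if_neg hne, hP, hval, Finset.prod_range_succ, ZMod.natCast_zmod_val]
      simp [mul_comm, mul_left_comm, mul_assoc]
    · have hic : i = ((nx - 1 : ℕ) : ZMod nx) := by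
        rw [← ZMod.natCast_zmod_val i, hi]
      have hi0 : (i + 1).val = 0 := by
        rw [hic]
        norm_num [← Nat.cast_add_one, Nat.sub_add_cancel hnx]
      have hRP : R j = P (i, j) * w (i, j) := by
        show (∏ i' : ZMod nx, w (i', j))
            = (∏ i' ∈ Finset.range i.val, w ((i' : ZMod nx), j)) * w (i, j)
        rw [← prod_range_cast' nx (fun i' => w (i', j))]
        have h3 : ∏ i' ∈ Finset.range ((nx - 1) + 1), w ((i' : ZMod nx), j)
            = (∏ i' ∈ Finset.range (nx - 1), w ((i' : ZMod nx), j)) * w (i, j) := by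
          rw [Finset.prod_range_succ, ← hic]
        rw [Nat.sub_add_cancel hnx] at h3
        rw [h3, hi]
      have key : T (j + 1) * (T j)⁻¹ * (P (i, j))⁻¹ = w (i, j) := by
        rw [hTstep, hRP]
        simp [mul_comm, mul_left_comm, mul_assoc]
      simp only [if_pos hi, hP, hi0, Finset.prod_range_zero]
      rw [← key, hP]
      simp [mul_comm, mul_left_comm, mul_assoc]
end

section
/- Fix integers n_x, n_y ≥ 1 and N ≥ 1, let S = ZMod n_x × ZMod n_y and N_site = n_x · n_y. Let θ : S → Fin N → ℝ be phase angles satisfying the constraint that Σ_{k ∈ S} Σ_{λ} θ_k(λ) ∈ 2πℤ. For each channel λ let φ_λ ∈ [−π, π) be the unique representative with (Σ_{k ∈ S} θ_k(λ)) − φ_λ ∈ 2πℤ, and define θ̃_k(λ) = θ_k(λ) − φ_λ / N_site. Then: (i) for every channel λ, Σ_{k ∈ S} θ̃_k(λ) ∈ 2πℤ; and (ii) the ℓ² distance satisfies √(Σ_{k ∈ S} Σ_λ (θ_k(λ) − θ̃_k(λ))²) ≤ π · √(N / N_site). -/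
open Real

/-- The link-generatable diagonal flux configurations form a `π√(N/N_site)`-net: given
phase angles `θ_k(λ)` with total sum in `2πℤ`, subtracting from each channel the averaged
defect `φ_λ / N_site` (where `φ_λ ∈ [−π, π)` represents `Σ_k θ_k(λ)` modulo `2π`) yields
angles `θ̃` whose per-channel sums lie in `2πℤ`, at ℓ² distance at most `π√(N/N_site)`. -/
theorem diagonal_flux_net (nx ny N : ℕ) [NeZero nx] [NeZero ny] (hN : 1 ≤ N)
    (θ : ZMod nx × ZMod ny → Fin N → ℝ)
    (hconstr : ∃ m : ℤ,
      ∑ k : ZMod nx × ZMod ny, ∑ lam : Fin N, θ k lam = 2 * Real.pi * (m : ℝ))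
    (φ : Fin N → ℝ)
    (hφ : ∀ lam : Fin N, φ lam ∈ Set.Ico (-Real.pi) Real.pi ∧
      ∃ m : ℤ, (∑ k : ZMod nx × ZMod ny, θ k lam) - φ lam = 2 * Real.pi * (m : ℝ))
    (θt : ZMod nx × ZMod ny → Fin N → ℝ)
    (hθt : ∀ k lam, θt k lam = θ k lam - φ lam / ((nx : ℝ) * (ny : ℝ))) :
    (∀ lam : Fin N, ∃ m : ℤ,
        ∑ k : ZMod nx × ZMod ny, θt k lam = 2 * Real.pi * (m : ℝ)) ∧
      Real.sqrt (∑ k : ZMod nx × ZMod ny, ∑ lam : Fin N, (θ k lam - θt k lam) ^ 2) ≤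
        Real.pi * Real.sqrt ((N : ℝ) / ((nx : ℝ) * (ny : ℝ))) := by
  have hx : (0:ℝ) < (nx:ℝ) := by exact_mod_cast Nat.pos_of_ne_zero (NeZero.ne nx)
  have hy : (0:ℝ) < (ny:ℝ) := by exact_mod_cast Nat.pos_of_ne_zero (NeZero.ne ny)
  have hc : (0:ℝ) < (nx:ℝ) * (ny:ℝ) := mul_pos hx hy
  have hcard : (Fintype.card (ZMod nx × ZMod ny) : ℝ) = (nx:ℝ) * (ny:ℝ) := by
    simp [ZMod.card]
  have hsumconst : ∀ r : ℝ, ∑ _k : ZMod nx × ZMod ny, r = ((nx:ℝ) * (ny:ℝ)) * r := by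
    intro r
    rw [Finset.sum_const, nsmul_eq_mul]
    simp [ZMod.card]
  constructor
  · intro lam
    obtain ⟨_, m, hm⟩ := hφ lam
    refine ⟨m, ?_⟩
    have : ∑ k : ZMod nx × ZMod ny, θt k lam
        = (∑ k : ZMod nx × ZMod ny, θ k lam) - φ lam := by
      simp only [hθt, Finset.sum_sub_distrib]
      rw [hsumconst (φ lam / ((nx:ℝ) * (ny:ℝ)))]
      field_simp
    rw [this, hm]
  · have hval : ∑ k : ZMod nx × ZMod ny, ∑ lam : Fin N, (θ k lam - θt k lam) ^ 2
        = ∑ lam : Fin N, (φ lam) ^ 2 / ((nx:ℝ) * (ny:ℝ)) := by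
      have : ∀ k : ZMod nx × ZMod ny, ∑ lam : Fin N, (θ k lam - θt k lam) ^ 2
          = ∑ lam : Fin N, (φ lam / ((nx:ℝ) * (ny:ℝ))) ^ 2 := by
        intro k; refine Finset.sum_congr rfl fun lam _ => ?_
        rw [hθt]; ring
      rw [Finset.sum_congr rfl fun k _ => this k, hsumconst]
      rw [Finset.mul_sum]
      refine Finset.sum_congr rfl fun lam _ => ?_
      field_simp
    rw [hval]
    have hbound : ∑ lam : Fin N, (φ lam) ^ 2 / ((nx:ℝ) * (ny:ℝ))
        ≤ (N:ℝ) * Real.pi ^ 2 / ((nx:ℝ) * (ny:ℝ)) := by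
      have : ∀ lam : Fin N, (φ lam) ^ 2 / ((nx:ℝ) * (ny:ℝ))
          ≤ Real.pi ^ 2 / ((nx:ℝ) * (ny:ℝ)) := by
        intro lam
        obtain ⟨⟨h1, h2⟩, -⟩ := hφ lam
        have hsq : (φ lam) ^ 2 ≤ Real.pi ^ 2 := sq_le_sq' h1 (le_of_lt h2)
        exact div_le_div_of_nonneg_right hsq hc.le
      calc ∑ lam : Fin N, (φ lam) ^ 2 / ((nx:ℝ) * (ny:ℝ))
          ≤ ∑ _lam : Fin N, Real.pi ^ 2 / ((nx:ℝ) * (ny:ℝ)) :=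
            Finset.sum_le_sum fun lam _ => this lam
        _ = (N:ℝ) * Real.pi ^ 2 / ((nx:ℝ) * (ny:ℝ)) := by
            rw [Finset.sum_const]; simp; ring
    calc Real.sqrt (∑ lam : Fin N, (φ lam) ^ 2 / ((nx:ℝ) * (ny:ℝ)))
        ≤ Real.sqrt ((N:ℝ) * Real.pi ^ 2 / ((nx:ℝ) * (ny:ℝ))) :=
          Real.sqrt_le_sqrt hbound
      _ = Real.pi * Real.sqrt ((N:ℝ) / ((nx:ℝ) * (ny:ℝ))) := by
          rw [show (N:ℝ) * Real.pi ^ 2 / ((nx:ℝ) * (ny:ℝ))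
              = Real.pi ^ 2 * ((N:ℝ) / ((nx:ℝ) * (ny:ℝ))) by ring,
            Real.sqrt_mul (sq_nonneg _), Real.sqrt_sq Real.pi_pos.le]
end
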